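/- Let G be a finite simple graph on n ≥ 1 vertices such that any two distinct vertices of degree less than Δ(G) are adjacent in G. Then more than n/2 vertices of G have degree Δ(G), where Δ(G) denotes the maximum degree of G. -/

import Mathlib

/-- The degree of a vertex, defined via `Set.ncard` of the neighbour set. -/
noncomputable def degr {V : Type*} (G : SimpleGraph V) (v : V) : ℕ :=
  (G.neighborSet v).ncard

/-- The maximum degree Δ(G). -/
noncomputable def maxDeg {V : Type*} (G : SimpleGraph V) : ℕ :=
  sSup (Set.range (degr G))

/-!
Let `S` be the set of vertices of degree `< Δ` and `M` the set of vertices of degree `Δ`. In the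
complement graph `S` is independent, every vertex of `M` has degree `δ = n - 1 - Δ` and every
vertex of `S` has degree at least `δ + 1`. All complement edges at `S` end in `M`, so counting them
from both sides gives `|S| (δ + 1) ≤ |M| δ`, which forces `|S| < |M|` as `M` is nonempty.
-/

open Finset

theorem degr_eq_degree {V : Type*} (G : SimpleGraph V) [Fintype V] [DecidableRel G.Adj] :
    degr G = fun v ↦ G.degree v := by
  ext v
  rw [degr, Set.ncard_eq_toFinset_card', ← G.neighborFinset_def, G.card_neighborFinset_eq_degree]

theorem maxDeg_eq_maxDegree {V : Type*} [Fintype V] [Nonempty V] (G : SimpleGraph V)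
    [DecidableRel G.Adj] : maxDeg G = G.maxDegree := by
  rw [maxDeg, degr_eq_degree]
  obtain ⟨u, hu⟩ := G.exists_maximal_degree_vertex
  refine le_antisymm (csSup_le (Set.range_nonempty _) ?_) (le_csSup ?_ ⟨u, hu.symm⟩)
  · exact Set.forall_mem_range.2 G.degree_le_maxDegree
  · exact (Set.finite_range _).bddAbove

namespace SimpleGraph

variable {V : Type*} [Fintype V] [DecidableEq V] {G : SimpleGraph V} [DecidableRel G.Adj]

theorem IsIndepSet.sum_degree_le_sum_degree_compl {s : Finset V} (hs : G.IsIndepSet s) :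
    ∑ v ∈ s, G.degree v ≤ ∑ v ∈ sᶜ, G.degree v := by
  have hout : ∀ v ∈ s, G.degree v = #(sᶜ.bipartiteAbove G.Adj v) := by
    intro v hv
    rw [← card_neighborFinset_eq_degree]
    congr 1
    ext w
    simp only [mem_neighborFinset, mem_bipartiteAbove, mem_compl, iff_and_self]
    exact fun hvw hw => hs hv hw (G.ne_of_adj hvw) hvw
  calc ∑ v ∈ s, G.degree v = ∑ v ∈ s, #(sᶜ.bipartiteAbove G.Adj v) := sum_congr rfl hout
    _ = ∑ u ∈ sᶜ, #(s.bipartiteBelow G.Adj u) :=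
      sum_card_bipartiteAbove_eq_sum_card_bipartiteBelow _
    _ ≤ ∑ u ∈ sᶜ, G.degree u := by
      refine sum_le_sum fun u _ => ?_
      rw [← card_neighborFinset_eq_degree]
      refine card_le_card fun w hw => ?_
      rw [mem_bipartiteBelow] at hw
      exact (mem_neighborFinset _ _ _).2 hw.2.symm

theorem card_lt_two_mul_card_maxDegree [Nonempty V]
    (h : G.IsClique {v | G.degree v < G.maxDegree}) :
    Fintype.card V < 2 * #{v | G.degree v = G.maxDegree} := by
  set S : Finset V := {v | G.degree v < G.maxDegree}
  have hSc : Sᶜ = ({v | G.degree v = G.maxDegree} : Finset V) := by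
    ext v
    simp [S, (G.degree_le_maxDegree v).ge_iff_eq', eq_comm]
  rw [← hSc, ← card_add_card_compl S]
  have hΔ : G.maxDegree < Fintype.card V := G.maxDegree_lt_card_verts
  set δ := Fintype.card V - 1 - G.maxDegree
  have hS : ∀ v ∈ S, δ + 1 ≤ Gᶜ.degree v := by
    intro v hv
    simp only [S, mem_filter, mem_univ, true_and] at hv
    rw [degree_compl]
    omega
  have hSc_deg : ∀ v ∈ Sᶜ, Gᶜ.degree v = δ := by
    intro v hv
    rw [hSc, mem_filter] at hv
    rw [degree_compl, hv.2]
  have hcount : #S * (δ + 1) ≤ #Sᶜ * δ := calc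
    #S * (δ + 1) ≤ ∑ v ∈ S, Gᶜ.degree v := by
      simpa [mul_comm] using card_nsmul_le_sum S _ _ hS
    _ ≤ ∑ v ∈ Sᶜ, Gᶜ.degree v :=
      IsIndepSet.sum_degree_le_sum_degree_compl (G.isIndepSet_compl.2 (by simpa [S] using h))
    _ = #Sᶜ * δ := by rw [sum_const_nat hSc_deg]
  obtain ⟨u, hu⟩ := G.exists_maximal_degree_vertex
  have hm : 0 < #Sᶜ := card_pos.2 ⟨u, by simp [hSc, hu]⟩
  by_contra! hle
  nlinarith

end SimpleGraph

/-- Plantholt–Shan. -/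
theorem many_max_degree_vertices
    (V : Type*) [Fintype V] [Nonempty V] (G : SimpleGraph V)
    (h : ∀ v w : V, v ≠ w → degr G v < maxDeg G → degr G w < maxDeg G → G.Adj v w) :
    (Fintype.card V : ℝ) / 2 < ({v : V | degr G v = maxDeg G}.ncard : ℝ) := by
  classical
  rw [degr_eq_degree, maxDeg_eq_maxDegree] at h ⊢
  have key := G.card_lt_two_mul_card_maxDegree fun v hv w hw hvw => h v w hvw hv hw
  rw [Set.ncard_eq_toFinset_card', Set.toFinset_ofPred]
  have : (Fintype.card V : ℝ) < 2 * #{v | G.degree v = G.maxDegree} := by exact_mod_cast key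
  linarith
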